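/- Let W be an n-letter square-free word and let 𝒜 be a set of square-completing quadruples (a, ℓ, b, c) in W such that no two elements of 𝒜 share the same pair (b, c). For an integer ℓ ≥ 2, let 𝒜_ℓ denote the set of quadruples in 𝒜 whose length parameter equals ℓ. Then for any integer L ≥ 300, the sum over ℓ with L ≤ ℓ < 7L/6 of |𝒜_ℓ| is at most 84n / L. -/

import Mathlib

/-- A word is square-free if it contains no factor of the form `X ++ X` with `X` nonempty. -/
def SquareFree {α : Type*} (W : List α) : Prop :=
  ∀ X : List α, X ≠ [] → ¬ (X ++ X) <:+: W

/-- `W'` is an extension of `W` if it is obtained by inserting a single letter into `W`. -/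
def IsExtension {α : Type*} (W W' : List α) : Prop :=
  ∃ (W₁ W₂ : List α) (x : α), W = W₁ ++ W₂ ∧ W' = W₁ ++ [x] ++ W₂

/-- A square-free word is extremal square-free if none of its extensions is square-free. -/
def ExtremalSquareFree {α : Type*} (W : List α) : Prop :=
  SquareFree W ∧ ∀ W', IsExtension W W' → ¬ SquareFree W'
/-- The factor `W[a, b)` of `W`, consisting of the letters `a, a+1, …, b-1`
(letters are numbered from 1). -/
def factor {α : Type*} (W : List α) (a b : ℕ) : List α :=
  (W.drop (a - 1)).take (b - a)

/-- The quadruple `(a, ℓ, b, c)` is square-completing in `W` if, in the word `W +_b c`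
obtained by inserting the letter `c` at gap `b` of `W`, the factors `[a, a+ℓ)` and
`[a+ℓ, a+2ℓ)` are equal (so they form a square of length `2ℓ`). -/
def SquareCompleting {α : Type*} (W : List α) (a ℓ b : ℕ) (c : α) : Prop :=
  1 ≤ a ∧ 1 ≤ ℓ ∧ a ≤ b + 1 ∧ b ≤ W.length ∧ a + 2 * ℓ ≤ W.length + 2 ∧
    factor (W.insertIdx b c) a (a + ℓ) = factor (W.insertIdx b c) (a + ℓ) (a + 2 * ℓ)

/-- The sign of a square-completing quadruple: `1` if `b ≤ a + ℓ - 2`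
(the inserted letter lies in the first half of the square), and `-1` if `b ≥ a + ℓ - 1`. -/
def scSign (a ℓ b : ℕ) : ℤ :=
  if b + 2 ≤ a + ℓ then 1 else -1

/-! In a square-free word, inserting a letter at gap `b` to complete a square of half-length `ℓ`
starting at the 0-indexed position `s = a - 1` forces `W` to split, at a cut, into two runs with
periods `ℓ - 1` and `ℓ` (in the order given by the sign) covering `[s, s + ℓ - 1)`. Two
quadruples with the same `ℓ` and sign whose windows meet have the same cut, hence the same
`(b, c)`. Two quadruples with `ℓ + 2 ≤ ℓ'` cannot share a window of length `6 (ℓ' - ℓ + 1)`: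
inside it there is a stretch of length `2 (ℓ' - ℓ + 1)` avoiding both cuts, on which periods
`p ≈ ℓ` and `p' ≈ ℓ'` give the period `p' - p` and hence a square. So the lengths of quadruples
sharing a window of length `L / 2 - 1` fall into at most 6 values in `[L, 7L/6)`, each taken by at
most 2 quadruples; every position lies in such a common window for the quadruples on either side
of it, hence in at most 24 windows. Since each window has `ℓ - 1 ≥ L - 1` positions, double
counting gives `|𝒜_{[L, 7L/6)}| (L - 1) ≤ 24 n`. -/

section

variable {α : Type*}

def HasPeriodOn (W : List α) (p s e : ℕ) : Prop :=
  ∀ i, s ≤ i → i < e → W[i]? = W[i + p]?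

theorem HasPeriodOn.mono {W : List α} {p s e s' e' : ℕ} (h : HasPeriodOn W p s e)
    (hs : s ≤ s') (he : e' ≤ e) : HasPeriodOn W p s' e' :=
  fun i hi hi' => h i (hs.trans hi) (hi'.trans_le he)

theorem HasPeriodOn.sub {W : List α} {p p' s e : ℕ} (h : HasPeriodOn W p s e)
    (h' : HasPeriodOn W p' s e) (hpp : p ≤ p') : HasPeriodOn W (p' - p) s (e - (p' - p)) := by
  intro i hi hi'
  rw [h' i hi (by omega), h (i + (p' - p)) (by omega) (by omega),
    show i + (p' - p) + p = i + p' by omega]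

theorem SquareFree.not_hasPeriodOn {W : List α} (hW : SquareFree W) {d s : ℕ} (hd : 0 < d)
    (hlen : s + 2 * d ≤ W.length) : ¬ HasPeriodOn W d s (s + d) := by
  intro hp
  set X := (W.drop s).take d
  have hX : X.length = d := by simp only [X, List.length_take, List.length_drop]; omega
  have hsq : (W.drop s).take (2 * d) = X ++ X := by
    refine List.ext_getElem? fun k => ?_
    simp only [X, List.getElem?_append, List.getElem?_take, List.getElem?_drop, hX]
    split_ifs <;> try first | rfl | omega
    rw [hp (s + (k - d)) (by omega) (by omega), show s + (k - d) + d = s + k by omega]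
  refine hW X (by rintro h; simp [h] at hX; omega) ⟨W.take s, (W.drop s).drop (2 * d), ?_⟩
  rw [← hsq, List.append_assoc, List.take_append_drop, List.take_append_drop]

theorem SquareFree.getElem?_ne_getElem?_succ {W : List α} (hW : SquareFree W) {i : ℕ}
    (hi : i + 2 ≤ W.length) : W[i]? ≠ W[i + 1]? := fun e =>
  hW.not_hasPeriodOn one_pos hi fun j hj hj' => by obtain rfl : j = i := (by omega); exact e

theorem SquareCompleting.hasPeriodOn_insertIdx {W : List α} {s ℓ b : ℕ} {c : α}
    (h : SquareCompleting W (s + 1) ℓ b c) : HasPeriodOn (W.insertIdx b c) ℓ s (s + ℓ) := by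
  intro i hi hi'
  have e := congrArg (·[i - s]?) h.2.2.2.2.2
  simp only [factor, List.getElem?_take, List.getElem?_drop] at e
  rw [if_pos (by omega), if_pos (by omega)] at e
  convert e using 2 <;> omega

/- The two shapes of `W` under a square of half-length `ℓ` starting at the 0-indexed position
`s = a - 1` and completed by inserting a letter at gap `b`: for sign `1` the letter is inserted at
the cut `t = b`, for sign `-1` it repeats the letter at the cut `g = b - ℓ`. -/

def PlusShape (W : List α) (s ℓ t : ℕ) : Prop :=
  s ≤ t ∧ t + 2 ≤ s + ℓ ∧ HasPeriodOn W (ℓ - 1) s t ∧ HasPeriodOn W ℓ t (s + ℓ - 1)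

def MinusShape (W : List α) (s ℓ g : ℕ) : Prop :=
  s + 1 ≤ g ∧ g + 1 ≤ s + ℓ ∧ HasPeriodOn W ℓ s g ∧ HasPeriodOn W (ℓ - 1) (g + 1) (s + ℓ)

theorem SquareCompleting.plusShape {W : List α} (hW : SquareFree W) {s ℓ b : ℕ} {c : α}
    (h : SquareCompleting W (s + 1) ℓ b c) (hl : 2 ≤ ℓ) (hb : b < s + ℓ) :
    PlusShape W s ℓ b ∧ W[b + (ℓ - 1)]? = some c := by
  have hV := h.hasPeriodOn_insertIdx
  obtain ⟨-, -, hsb, hbn, hlen, -⟩ := h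
  have left : ∀ i, s ≤ i → i < b → W[i]? = W[i + (ℓ - 1)]? := fun i hi hib => by
    have e := hV i hi (by omega)
    rwa [List.getElem?_insertIdx_of_lt hib, List.getElem?_insertIdx_of_gt (by omega),
      Nat.add_sub_assoc (by omega)] at e
  have hcut : b + 2 ≤ s + ℓ := by
    by_contra hcut
    exact hW.not_hasPeriodOn (s := s) (d := ℓ - 1) (by omega) (by omega)
      fun i hi hi' => left i hi (by omega)
  refine ⟨⟨by omega, hcut, left, fun i hi hi' => ?_⟩, ?_⟩
  · have e := hV (i + 1) (by omega) (by omega)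
    rwa [List.getElem?_insertIdx_of_gt (by omega), List.getElem?_insertIdx_of_gt (by omega),
      Nat.add_sub_cancel, show i + 1 + ℓ - 1 = i + ℓ by omega] at e
  · have e := hV b (by omega) (by omega)
    rwa [List.getElem?_insertIdx_self, if_pos hbn, List.getElem?_insertIdx_of_gt (by omega),
      Nat.add_sub_assoc (by omega), eq_comm] at e

theorem SquareCompleting.minusShape {W : List α} (hW : SquareFree W) {s ℓ b : ℕ} {c : α}
    (h : SquareCompleting W (s + 1) ℓ b c) (hl : 2 ≤ ℓ) (hb : s + ℓ ≤ b) :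
    MinusShape W s ℓ (b - ℓ) ∧ W[b - ℓ]? = some c := by
  have hV := h.hasPeriodOn_insertIdx
  obtain ⟨-, -, hsb, hbn, hlen, -⟩ := h
  have left : ∀ i, s ≤ i → i < s + ℓ → i + ℓ < b → W[i]? = W[i + ℓ]? := fun i hi hi' hib => by
    have e := hV i hi hi'
    rwa [List.getElem?_insertIdx_of_lt (by omega), List.getElem?_insertIdx_of_lt hib] at e
  have right : ∀ i, b < i + ℓ → i < s + ℓ → W[i]? = W[i + (ℓ - 1)]? := fun i hib hi => by
    have e := hV i (by omega) hi
    rwa [List.getElem?_insertIdx_of_lt (by omega), List.getElem?_insertIdx_of_gt hib,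
      Nat.add_sub_assoc (by omega)] at e
  have hnear : b < s + 2 * ℓ := by
    by_contra hfar
    exact hW.not_hasPeriodOn (by omega) (by omega) fun i hi hi' => left i hi hi' (by omega)
  have hcut : s + 1 + ℓ ≤ b := by
    by_contra hcut
    exact hW.not_hasPeriodOn (s := s + 1) (d := ℓ - 1) (by omega) (by omega)
      fun i hi hi' => right i (by omega) (by omega)
  refine ⟨⟨by omega, by omega, fun i hi hi' => left i hi (by omega) (by omega),
    fun i hi hi' => right i (by omega) hi'⟩, ?_⟩
  have e := hV (b - ℓ) (by omega) (by omega)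
  rwa [List.getElem?_insertIdx_of_lt (by omega), Nat.sub_add_cancel (by omega),
    List.getElem?_insertIdx_self, if_pos hbn] at e

theorem PlusShape.cut_eq {W : List α} (hW : SquareFree W) {s s' ℓ t t' : ℕ}
    (h : PlusShape W s ℓ t) (h' : PlusShape W s' ℓ t') (hss : s ≤ s') (hov : s' + 2 ≤ s + ℓ)
    (hlen : s' + 2 * ℓ ≤ W.length + 1) : t = t' := by
  obtain ⟨hst, hts, r1, r2⟩ := h
  obtain ⟨hst', hts', r1', r2'⟩ := h'
  -- both periods `ℓ - 1` and `ℓ` at `i` force two equal adjacent letters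
  have both : ∀ i, W[i]? = W[i + ℓ]? → W[i]? = W[i + (ℓ - 1)]? → i + ℓ + 1 ≤ W.length →
      False := fun i e1 e2 hi => by
    refine hW.getElem?_ne_getElem?_succ (i := i + (ℓ - 1)) (by omega) ?_
    rw [← e2, e1, show i + (ℓ - 1) + 1 = i + ℓ by omega]
  have hle : t ≤ t' := by
    by_contra! hlt
    exact both t' (r2' t' le_rfl (by omega)) (r1 t' (by omega) hlt) (by omega)
  have hge : t' ≤ t ∨ t' ≤ s' := by
    by_contra! hlt
    rcases le_total s' t with hst | hts
    · exact both t (r2 t le_rfl (by omega)) (r1' t hst hlt.1) (by omega)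
    · exact both s' (r2 s' hts (by omega)) (r1' s' le_rfl hlt.2) (by omega)
  refine hge.elim (fun hge => le_antisymm hle hge) fun hts' => ?_
  by_contra hne
  refine hW.not_hasPeriodOn (s := t) (d := ℓ) (by omega) (by omega) fun i hi hi' => ?_
  rcases lt_or_ge i (s + ℓ - 1) with hi'' | hi''
  · exact r2 i hi hi''
  · exact r2' i (by omega) (by omega)

theorem MinusShape.cut_eq {W : List α} (hW : SquareFree W) {s s' ℓ g g' : ℕ}
    (h : MinusShape W s ℓ g) (h' : MinusShape W s' ℓ g') (hss : s ≤ s') (hov : s' + 2 ≤ s + ℓ)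
    (hlen : s' + 2 * ℓ ≤ W.length + 1) : g = g' := by
  obtain ⟨hsg, hgs, r1, r2⟩ := h
  obtain ⟨hsg', hgs', r1', r2'⟩ := h'
  -- period `ℓ` at `i` and period `ℓ - 1` at `i + 1` force two equal adjacent letters
  have both : ∀ i, W[i]? = W[i + ℓ]? → W[i + 1]? = W[i + 1 + (ℓ - 1)]? → i + 2 ≤ W.length →
      False := fun i e1 e2 hi => by
    refine hW.getElem?_ne_getElem?_succ hi ?_
    rw [e1, e2, show i + 1 + (ℓ - 1) = i + ℓ by omega]
  have hle : g ≤ g' := by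
    by_contra! hlt
    exact both g' (r1 g' (by omega) hlt) (r2' (g' + 1) le_rfl (by omega)) (by omega)
  refine le_antisymm hle (not_lt.1 fun hlt => ?_)
  rcases le_total s' g with hsg'' | hgs''
  · rcases le_or_gt (g + 2) (s + ℓ) with hg | hg
    · exact both g (r1' g hsg'' hlt) (r2 (g + 1) le_rfl (by omega)) (by omega)
    refine hW.not_hasPeriodOn (s := s) (d := ℓ) (by omega) (by omega) fun i hi hi' => ?_
    rcases lt_or_ge i g with hi'' | hi''
    · exact r1 i hi hi''
    · exact r1' i (by omega) (by omega)
  · exact both s' (r1' s' le_rfl (by omega)) (r2 (s' + 1) (by omega) (by omega)) (by omega)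

/-- 0-indexed; the last letter of the first half of the square is left out so that, for either
sign, the window is covered by the two periodic runs and the cut of `PlusShape` / `MinusShape`. -/
def scWindow (a ℓ : ℕ) : Finset ℕ := Finset.Ico (a - 1) (a + ℓ - 2)

theorem SquareCompleting.eq_of_overlap {W : List α} (hW : SquareFree W) {a a' ℓ b b' x : ℕ}
    {c c' : α} (h : SquareCompleting W a ℓ b c) (h' : SquareCompleting W a' ℓ b' c')
    (hl : 2 ≤ ℓ) (hx : x ∈ scWindow a ℓ) (hx' : x ∈ scWindow a' ℓ)
    (hsign : scSign a ℓ b = scSign a' ℓ b') : b = b' ∧ c = c' := by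
  wlog haa : a ≤ a' generalizing a a' b b' c c'
  · obtain ⟨hb, hc⟩ := this h' h hx' hx hsign.symm (by omega)
    exact ⟨hb.symm, hc.symm⟩
  obtain ⟨s, rfl⟩ : ∃ s, a = s + 1 := ⟨a - 1, by have := h.1; omega⟩
  obtain ⟨s', rfl⟩ : ∃ s', a' = s' + 1 := ⟨a' - 1, by have := h'.1; omega⟩
  simp only [scWindow, Finset.mem_Ico] at hx hx'
  have hlen := h'.2.2.2.2.1
  unfold scSign at hsign
  split_ifs at hsign with hb hb'
  · obtain ⟨hP, hc⟩ := h.plusShape hW hl (by omega)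
    obtain ⟨hP', hc'⟩ := h'.plusShape hW hl (by omega)
    obtain rfl := hP.cut_eq hW hP' (by omega) (by omega) (by omega)
    exact ⟨rfl, Option.some.inj (hc.symm.trans hc')⟩
  · obtain ⟨hM, hc⟩ := h.minusShape hW hl (by omega)
    obtain ⟨hM', hc'⟩ := h'.minusShape hW hl (by omega)
    have hg := hM.cut_eq hW hM' (by omega) (by omega) (by omega)
    rw [hg] at hc
    exact ⟨by omega, Option.some.inj (hc.symm.trans hc')⟩

theorem SquareCompleting.exists_cut {W : List α} (hW : SquareFree W) {s ℓ b : ℕ} {c : α}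
    (h : SquareCompleting W (s + 1) ℓ b c) (hl : 2 ≤ ℓ) :
    ∃ z, ∀ u e, s ≤ u → e + 1 ≤ s + ℓ → (z < u ∨ e ≤ z) →
      ∃ p, ℓ - 1 ≤ p ∧ p ≤ ℓ ∧ HasPeriodOn W p u e := by
  rcases lt_or_ge b (s + ℓ) with hb | hb
  · obtain ⟨⟨-, -, r1, r2⟩, -⟩ := h.plusShape hW hl hb
    refine ⟨b, fun u e hu he hz => hz.elim (fun hz => ?_) fun hz => ?_⟩
    · exact ⟨ℓ, by omega, le_rfl, r2.mono hz.le (by omega)⟩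
    · exact ⟨ℓ - 1, le_rfl, by omega, r1.mono hu hz⟩
  · obtain ⟨⟨-, -, r1, r2⟩, -⟩ := h.minusShape hW hl hb
    refine ⟨b - ℓ, fun u e hu he hz => hz.elim (fun hz => ?_) fun hz => ?_⟩
    · exact ⟨ℓ - 1, le_rfl, by omega, r2.mono hz (by omega)⟩
    · exact ⟨ℓ, by omega, le_rfl, r1.mono hu hz⟩

theorem exists_window_avoiding (y w D z z' : ℕ) (hw : 6 * D ≤ w) :
    ∃ u, y ≤ u ∧ u + 2 * D ≤ y + w ∧ (z < u ∨ u + 2 * D ≤ z) ∧ (z' < u ∨ u + 2 * D ≤ z') := by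
  by_contra! hne
  have := hne y
  have := hne (z + 1)
  have := hne (z' + 1)
  omega

theorem SquareCompleting.common_window_lt {W : List α} (hW : SquareFree W) {a a' ℓ ℓ' b b' : ℕ}
    {c c' : α} (h : SquareCompleting W a ℓ b c) (h' : SquareCompleting W a' ℓ' b' c')
    (hl : 2 ≤ ℓ) (hll : ℓ + 2 ≤ ℓ') {y w : ℕ} (hw : Finset.Ico y (y + w) ⊆ scWindow a ℓ)
    (hw' : Finset.Ico y (y + w) ⊆ scWindow a' ℓ') : w < 6 * (ℓ' - ℓ + 1) := by
  by_contra! hD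
  obtain ⟨s, rfl⟩ : ∃ s, a = s + 1 := ⟨a - 1, by have := h.1; omega⟩
  obtain ⟨s', rfl⟩ : ∃ s', a' = s' + 1 := ⟨a' - 1, by have := h'.1; omega⟩
  have hlen := h.2.2.2.2.1
  have hmem : ∀ {i}, i ∈ Finset.Ico y (y + w) →
      s ≤ i ∧ i + 2 ≤ s + ℓ ∧ s' ≤ i ∧ i + 2 ≤ s' + ℓ' := fun hi => by
      have h₁ := hw hi
      have h₂ := hw' hi
      simp only [scWindow, Finset.mem_Ico] at h₁ h₂
      omega
  have hy := hmem (Finset.mem_Ico.2 ⟨le_rfl, by omega⟩)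
  have hyw := hmem (i := y + w - 1) (Finset.mem_Ico.2 ⟨by omega, by omega⟩)
  obtain ⟨z, hz⟩ := h.exists_cut hW hl
  obtain ⟨z', hz'⟩ := h'.exists_cut hW (by omega)
  obtain ⟨u, hyu, huw, hzu, hzu'⟩ := exists_window_avoiding y w (ℓ' - ℓ + 1) z z' hD
  obtain ⟨p, hp, hp', hper⟩ := hz u (u + 2 * (ℓ' - ℓ + 1)) (by omega) (by omega) hzu
  obtain ⟨q, hq, hq', hperq⟩ := hz' u (u + 2 * (ℓ' - ℓ + 1)) (by omega) (by omega) hzu'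
  -- two nearby periods on a long enough window yield the short period `q - p`
  exact hW.not_hasPeriodOn (s := u) (d := q - p) (by omega) (by omega)
    ((hper.sub hperq (by omega)).mono le_rfl (by omega))

theorem card_le_of_near_or_far {T : Finset ℕ} {lo K m : ℕ} (hK : 0 < K)
    (hT : ∀ t ∈ T, lo ≤ t ∧ t < lo + m * K) (hfar : ∀ u ∈ T, ∀ v ∈ T, u + 2 ≤ v → u + K ≤ v) :
    T.card ≤ 2 * m := by
  have hblock : ∀ u v, lo ≤ u → lo ≤ v → (u - lo) / K = (v - lo) / K → v < u + K := by
    intro u v hu hv huv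
    have := Nat.div_add_mod (u - lo) K
    have := Nat.div_add_mod (v - lo) K
    have := Nat.mod_lt (v - lo) hK
    rw [huv] at *
    omega
  have hfiber : ∀ j ∈ Finset.range m, (T.filter fun t => (t - lo) / K = j).card ≤ 2 := by
    intro j _
    set F := T.filter fun t => (t - lo) / K = j
    rcases F.eq_empty_or_nonempty with hF | hF
    · simp [hF]
    have hmin := Finset.mem_filter.1 (F.min'_mem hF)
    have hsub : F ⊆ Finset.Icc (F.min' hF) (F.min' hF + 1) := fun v hv => by
      have hvF := Finset.mem_filter.1 hv
      have hle := F.min'_le v hv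
      have := hblock _ _ (hT _ hmin.1).1 (hT v hvF.1).1 (hmin.2.trans hvF.2.symm)
      have := hfar _ hmin.1 v hvF.1
      simp only [Finset.mem_Icc]
      omega
    have := Finset.card_le_card hsub
    rw [Nat.card_Icc] at this
    omega
  calc T.card ≤ 2 * (Finset.range m).card :=
        Finset.card_le_mul_card_image_of_maps_to (fun t ht => by
          have := hT t ht
          rw [Finset.mem_range, Nat.div_lt_iff_lt_mul hK]
          omega) 2 hfiber
    _ = 2 * m := by rw [Finset.card_range]

theorem scSign_mem (a ℓ b : ℕ) : scSign a ℓ b ∈ (({1, -1} : Finset ℤ) : Set ℤ) := by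
  unfold scSign
  split_ifs <;> simp

theorem card_le_twelve_of_common_window {W : List α} (hW : SquareFree W)
    {T : Finset (ℕ × ℕ × ℕ × α)} (hT : ∀ q ∈ T, SquareCompleting W q.1 q.2.1 q.2.2.1 q.2.2.2)
    (hbc : Set.InjOn (fun q : ℕ × ℕ × ℕ × α => (q.2.2.1, q.2.2.2)) T) {L : ℕ} (hL : 38 ≤ L)
    (hℓ : ∀ q ∈ T, q.2.1 ∈ Finset.Ico L ((7 * L + 5) / 6)) {y : ℕ}
    (hy : ∀ q ∈ T, Finset.Ico y (y + (L / 2 - 1)) ⊆ scWindow q.1 q.2.1) : T.card ≤ 12 := by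
  have hℓ' : ∀ q ∈ T, L ≤ q.2.1 ∧ q.2.1 < (7 * L + 5) / 6 :=
    fun q hq => Finset.mem_Ico.1 (hℓ q hq)
  have hy₀ : y ∈ Finset.Ico y (y + (L / 2 - 1)) := Finset.mem_Ico.2 ⟨le_rfl, by omega⟩
  have hsign : ∀ v ∈ T.image (·.2.1), (T.filter fun q => q.2.1 = v).card ≤ 2 := by
    intro v _
    refine Finset.card_le_card_of_injOn (t := ({1, -1} : Finset ℤ))
      (fun q : ℕ × ℕ × ℕ × α => scSign q.1 q.2.1 q.2.2.1)
      (fun q _ => scSign_mem q.1 q.2.1 q.2.2.1)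
      fun q hq q' hq' hqq' => ?_
    obtain ⟨hqT, rfl⟩ := Finset.mem_filter.1 hq
    obtain ⟨hqT', hv⟩ := Finset.mem_filter.1 hq'
    have h' := hT q' hqT'
    have hw' := hy q' hqT'
    rw [hv] at h' hw'
    simp only [hv] at hqq'
    obtain ⟨hb, hc⟩ := (hT q hqT).eq_of_overlap hW h' (by linarith [hℓ' q hqT])
      (hy q hqT hy₀) (hw' hy₀) hqq'
    exact hbc hqT hqT' (Prod.ext hb hc)
  have hlengths : (T.image (·.2.1)).card ≤ 6 := by
    refine card_le_of_near_or_far (lo := L) (K := (L / 2 - 1) / 6) (m := 3) (by omega)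
      (fun t ht => ?_) fun u hu v hv huv => ?_
    · obtain ⟨q, hq, rfl⟩ := Finset.mem_image.1 ht
      have := hℓ' q hq
      omega
    · obtain ⟨q, hq, rfl⟩ := Finset.mem_image.1 hu
      obtain ⟨q', hq', rfl⟩ := Finset.mem_image.1 hv
      have := (hT q hq).common_window_lt hW (hT q' hq') (by linarith [hℓ' q hq]) huv
        (hy q hq) (hy q' hq')
      omega
  calc T.card ≤ 2 * (T.image (·.2.1)).card := Finset.card_le_mul_card_image T 2 hsign
    _ ≤ 12 := by omega

theorem card_filter_mem_scWindow_le {W : List α} (hW : SquareFree W)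
    {A : Finset (ℕ × ℕ × ℕ × α)} (hA : ∀ q ∈ A, SquareCompleting W q.1 q.2.1 q.2.2.1 q.2.2.2)
    (hbc : Set.InjOn (fun q : ℕ × ℕ × ℕ × α => (q.2.2.1, q.2.2.2)) A) {L : ℕ} (hL : 38 ≤ L)
    (hℓ : ∀ q ∈ A, q.2.1 ∈ Finset.Ico L ((7 * L + 5) / 6)) (x : ℕ) :
    (A.filter fun q => x ∈ scWindow q.1 q.2.1).card ≤ 24 := by
  set S := A.filter fun q => x ∈ scWindow q.1 q.2.1
  have hSA : S ⊆ A := Finset.filter_subset _ _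
  have hS : ∀ q ∈ S, q.1 - 1 ≤ x ∧ x + 2 < q.1 + q.2.1 ∧ L ≤ q.2.1 := fun q hq => by
    obtain ⟨hqA, hx⟩ := Finset.mem_filter.1 hq
    have := Finset.mem_Ico.1 (hℓ q hqA)
    simp only [scWindow, Finset.mem_Ico] at hx
    omega
  have hpart : ∀ (p : ℕ × ℕ × ℕ × α → Prop) [DecidablePred p] (y : ℕ),
      (∀ q ∈ S, p q → Finset.Ico y (y + (L / 2 - 1)) ⊆ scWindow q.1 q.2.1) →
      (S.filter p).card ≤ 12 := fun p _ y hy => by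
    have hsub : S.filter p ⊆ A := (Finset.filter_subset _ _).trans hSA
    refine card_le_twelve_of_common_window hW (fun q hq => hA q (hsub hq)) (hbc.mono hsub) hL
      (fun q hq => hℓ q (hsub hq)) (y := y) fun q hq => ?_
    obtain ⟨hqS, hpq⟩ := Finset.mem_filter.1 hq
    exact hy q hqS hpq
  -- a window of length `L / 2 - 1` either ends just after `x` or starts at `x`
  have hleft := hpart (fun q => q.1 + (L / 2 - 1) ≤ x + 2) (x + 1 - (L / 2 - 1))
    fun q hq hpq => Finset.Ico_subset_Ico (by have := hS q hq; omega) (by have := hS q hq; omega)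
  have hright := hpart (fun q => ¬ q.1 + (L / 2 - 1) ≤ x + 2) x
    fun q hq hpq => Finset.Ico_subset_Ico (by have := hS q hq; omega) (by have := hS q hq; omega)
  have := Finset.card_filter_add_card_filter_not (s := S) fun q => q.1 + (L / 2 - 1) ≤ x + 2
  omega

theorem card_mul_le_length_mul {W : List α} {B : Finset (ℕ × ℕ × ℕ × α)}
    (hB : ∀ q ∈ B, SquareCompleting W q.1 q.2.1 q.2.2.1 q.2.2.2) {L k : ℕ}
    (hL : ∀ q ∈ B, L ≤ q.2.1) (hk : ∀ x, (B.filter fun q => x ∈ scWindow q.1 q.2.1).card ≤ k) :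
    B.card * (L - 1) ≤ W.length * k := by
  have habove : ∀ q ∈ B, L - 1 ≤ ((Finset.range W.length).bipartiteAbove
      (fun q x => x ∈ scWindow q.1 q.2.1) q).card := fun q hq => by
    obtain ⟨ha, -, -, -, hlen, -⟩ := hB q hq
    have hsub : scWindow q.1 q.2.1 ⊆ Finset.range W.length := by
      rw [Finset.range_eq_Ico]
      exact Finset.Ico_subset_Ico (Nat.zero_le _) (by omega)
    rw [Finset.bipartiteAbove, Finset.filter_mem_eq_inter, Finset.inter_eq_right.2 hsub,
      scWindow, Nat.card_Ico]
    have := hL q hq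
    omega
  simpa using Finset.card_mul_le_card_mul _ habove fun x _ => hk x

end

/-- `(7 * L + 5) / 6` is the least integer strictly greater than every `ℓ < 7L/6`, so the sum
ranges exactly over the integers `ℓ` with `L ≤ ℓ < 7L/6`. -/
theorem count_square_completing_seventh_range {α : Type*} (W : List α) (n : ℕ)
    (hn : W.length = n) (hW : SquareFree W)
    (A : Finset (ℕ × ℕ × ℕ × α))
    (hA : ∀ q ∈ A, SquareCompleting W q.1 q.2.1 q.2.2.1 q.2.2.2)
    (hbc : ∀ q ∈ A, ∀ q' ∈ A, q.2.2.1 = q'.2.2.1 → q.2.2.2 = q'.2.2.2 → q = q')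
    (L : ℕ) (hL : 300 ≤ L) :
    ((∑ ℓ ∈ Finset.Ico L ((7 * L + 5) / 6),
        (A.filter (fun q => q.2.1 = ℓ)).card : ℕ) : ℝ) ≤ 84 * n / L := by
  set B := A.filter fun q => q.2.1 ∈ Finset.Ico L ((7 * L + 5) / 6)
  have hsum : ∑ ℓ ∈ Finset.Ico L ((7 * L + 5) / 6), (A.filter (fun q => q.2.1 = ℓ)).card =
      B.card := Finset.sum_card_fiberwise_eq_card_filter _ _ _
  have hBA : B ⊆ A := Finset.filter_subset _ _
  have hℓ : ∀ q ∈ B, q.2.1 ∈ Finset.Ico L ((7 * L + 5) / 6) :=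
    fun q hq => (Finset.mem_filter.1 hq).2
  have hcover := card_filter_mem_scWindow_le hW (fun q hq => hA q (hBA hq))
    (fun q hq q' hq' h => hbc q (hBA hq) q' (hBA hq') (congrArg Prod.fst h) (congrArg Prod.snd h))
    (by omega) hℓ
  have hcount : B.card * (L - 1) ≤ n * 24 := hn ▸ card_mul_le_length_mul
    (fun q hq => hA q (hBA hq)) (fun q hq => (Finset.mem_Ico.1 (hℓ q hq)).1) hcover
  have hB : B.card * L ≤ 84 * n := by
    have : B.card * L = B.card * (L - 1) + B.card := by
      rw [← Nat.mul_add_one, Nat.sub_add_cancel (by omega)]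
    nlinarith
  rw [hsum, le_div_iff₀ (by positivity)]
  exact_mod_cast hB
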